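/- arXiv:2101.10080 — 4 statements merged into one kernel-verified Lean document; each statement's English description precedes it below -/
import Mathlib

section
/- The selection vector field Ψ_sel(ν) := s(F(ν) − f(ν)ν) satisfies Ψ_sel(μ_{C_i} ⊗ μ'_{D_i}) = Ψ_sel(μ)_{C_i} ⊗ μ'_{D_i} for all probability measures μ, μ' on X and all crossover sites i ≠ i•; consequently T_h^sel(μ_{C_i} ⊗ μ'_{D_i}) = T_h^sel(μ)_{C_i} ⊗ μ'_{D_i}. -/
open Finset Real Filter MeasureTheory

noncomputable section

abbrev X (n : ℕ) := Fin n → Bool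

def isProb {n : ℕ} (ν : X n → ℝ) : Prop :=
  (∀ x, 0 ≤ ν x) ∧ ∑ x, ν x = 1

def Fsel {n : ℕ} (i0 : Fin n) (ν : X n → ℝ) : X n → ℝ :=
  fun x => if x i0 = false then ν x else 0

def fsel {n : ℕ} (i0 : Fin n) (ν : X n → ℝ) : ℝ := ∑ x, Fsel i0 ν x

def phi {n : ℕ} (s : ℝ) (i0 : Fin n) (t : ℝ) (ν : X n → ℝ) : X n → ℝ :=
  fun x => (Real.exp (s * t) * Fsel i0 ν x + (ν x - Fsel i0 ν x)) /
    (Real.exp (s * t) * fsel i0 ν + 1 - fsel i0 ν)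

/-- marginal of `ν` with respect to the coordinates in `A`, evaluated at (the
restriction to `A` of) `y`. -/
def marg {n : ℕ} (A : Finset (Fin n)) (ν : X n → ℝ) (y : X n) : ℝ :=
  ∑ x, if ∀ i ∈ A, x i = y i then ν x else 0

/-- the `i`-tail `D_i = {j : i• ≤ i ≤ j or i• ≥ i ≥ j}`. -/
def Dtail {n : ℕ} (i0 i : Fin n) : Finset (Fin n) :=
  univ.filter (fun j => (i0 ≤ i ∧ i ≤ j) ∨ (i ≤ i0 ∧ j ≤ i))

/-- the `i`-head `C_i`, the complement of the tail. -/
def Chead {n : ℕ} (i0 i : Fin n) : Finset (Fin n) := univ \ Dtail i0 i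

/-- Euler step of the pure selection equation. -/
def Tsel {n : ℕ} (s h : ℝ) (i0 : Fin n) (ν : X n → ℝ) : X n → ℝ :=
  fun x => ν x + h * s * (Fsel i0 ν x - fsel i0 ν * ν x)

def glue {n : ℕ} (D : Finset (Fin n)) (a b : X n) : X n :=
  fun j => if j ∈ D then b j else a j

lemma glue_spec {n : ℕ} (D : Finset (Fin n)) (a b x : X n) :
    ((∀ j ∈ univ \ D, a j = x j) ∧ (∀ j ∈ D, b j = x j)) ↔ x = glue D a b := by
  constructor
  · rintro ⟨h1, h2⟩
    funext j
    by_cases hj : j ∈ D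
    · simp [glue, hj, (h2 j hj).symm]
    · simpa [glue, hj] using (h1 j (by simp [hj])).symm
  · rintro rfl
    refine ⟨fun j hj => ?_, fun j hj => ?_⟩
    · simp at hj; simp [glue, hj]
    · simp [glue, hj]

lemma fsel_prod_aux {n : ℕ} (D : Finset (Fin n)) (i0 : Fin n) (hi0 : i0 ∉ D)
    (μ μ' : X n → ℝ) :
    ∑ x, (if x i0 = false then marg (univ \ D) μ x * marg D μ' x else 0)
      = (∑ a, if a i0 = false then μ a else 0) * ∑ b, μ' b := by
  have key : ∀ x : X n, (if x i0 = false then marg (univ \ D) μ x * marg D μ' x else 0)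
      = ∑ a, ∑ b, (if x = glue D a b ∧ x i0 = false then μ a * μ' b else 0) := by
    intro x
    rw [show (if x i0 = false then marg (univ \ D) μ x * marg D μ' x else 0)
        = (if x i0 = false then marg (univ \ D) μ x else 0) * marg D μ' x by
      by_cases hx : x i0 = false <;> simp [hx]]
    unfold marg
    rw [show (if x i0 = false then (∑ a : X n, if ∀ j ∈ univ \ D, a j = x j then μ a else 0) else 0)
        = ∑ a : X n, if x i0 = false then (if ∀ j ∈ univ \ D, a j = x j then μ a else 0) else 0 by
      by_cases hx : x i0 = false <;> simp [hx]]
    rw [Finset.sum_mul_sum]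
    · congr 1; funext a; congr 1; funext b
      by_cases hx : x i0 = false
      · by_cases hg : x = glue D a b
        · obtain ⟨h1, h2⟩ := (glue_spec D a b x).mpr hg
          conv_rhs => rw [if_pos ⟨hg, hx⟩]
          rw [if_pos hx, if_pos h1, if_pos h2]
        · have hn : ¬ ((∀ j ∈ univ \ D, a j = x j) ∧ (∀ j ∈ D, b j = x j)) := by
            rw [glue_spec]; exact hg
          conv_rhs => rw [if_neg (show ¬(x = glue D a b ∧ x i0 = false) from fun h => hg h.1)]
          rw [if_pos hx]
          by_cases h1 : ∀ j ∈ univ \ D, a j = x j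
          · rw [if_pos h1, if_neg (fun h2 => hn ⟨h1, h2⟩), mul_zero]
          · rw [if_neg h1, zero_mul]
      · conv_rhs => rw [if_neg (show ¬(x = glue D a b ∧ x i0 = false) from fun h => hx h.2)]
        rw [if_neg hx, zero_mul]
  rw [Finset.sum_congr rfl (fun x _ => key x), Finset.sum_comm]
  rw [Finset.sum_mul]
  refine Finset.sum_congr rfl (fun a _ => ?_)
  rw [Finset.sum_comm, Finset.mul_sum]
  refine Finset.sum_congr rfl (fun b _ => ?_)
  simp only [ite_and]
  rw [Finset.sum_ite_eq' Finset.univ (glue D a b)]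
  have hg : glue D a b i0 = a i0 := by simp [glue, hi0]
  by_cases ha : a i0 = false <;> simp [hg, ha]


lemma marg_lin {n : ℕ} (A : Finset (Fin n)) (c1 c2 : ℝ) (f g : X n → ℝ) (x : X n) :
    marg A (fun y => c1 * f y + c2 * g y) x = c1 * marg A f x + c2 * marg A g x := by
  unfold marg
  rw [Finset.mul_sum, Finset.mul_sum, ← Finset.sum_add_distrib]
  refine Finset.sum_congr rfl (fun a _ => ?_)
  by_cases hc : ∀ j ∈ A, a j = x j
  · rw [if_pos hc, if_pos hc, if_pos hc]
  · rw [if_neg hc, if_neg hc, if_neg hc]; ring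

lemma marg_Fsel {n : ℕ} (A : Finset (Fin n)) (i0 : Fin n) (hi0 : i0 ∈ A)
    (μ : X n → ℝ) (x : X n) :
    marg A (Fsel i0 μ) x = if x i0 = false then marg A μ x else 0 := by
  unfold marg Fsel
  rw [show (if x i0 = false then (∑ a : X n, if ∀ j ∈ A, a j = x j then μ a else 0) else 0)
      = ∑ a : X n, if x i0 = false then (if ∀ j ∈ A, a j = x j then μ a else 0) else 0 by
    by_cases hx : x i0 = false <;> simp [hx]]
  refine Finset.sum_congr rfl (fun a _ => ?_)
  by_cases hc : ∀ j ∈ A, a j = x j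
  · rw [if_pos hc]
    conv_rhs => rw [if_pos hc]
    rw [hc i0 hi0]
  · simp [hc]

/-- The selection vector field Ψ_sel, and hence the Euler step T_h^sel, commutes
with the head/tail product-measure construction. -/
theorem stmt_4 {n : ℕ} (i0 i : Fin n) (hi : i ≠ i0) (s h : ℝ) (hs : 0 < s) (hh : 0 < h)
    (μ μ' : X n → ℝ) (hμ : isProb μ) (hμ' : isProb μ') :
    (∀ x, s * (Fsel i0 (fun y => marg (Chead i0 i) μ y * marg (Dtail i0 i) μ' y) x
            - fsel i0 (fun y => marg (Chead i0 i) μ y * marg (Dtail i0 i) μ' y)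
              * (marg (Chead i0 i) μ x * marg (Dtail i0 i) μ' x))
        = marg (Chead i0 i) (fun y => s * (Fsel i0 μ y - fsel i0 μ * μ y)) x
            * marg (Dtail i0 i) μ' x) ∧
    (∀ x, Tsel s h i0 (fun y => marg (Chead i0 i) μ y * marg (Dtail i0 i) μ' y) x
        = marg (Chead i0 i) (Tsel s h i0 μ) x * marg (Dtail i0 i) μ' x) := by
  have hD : i0 ∉ Dtail i0 i := by
    intro hmem
    rw [Dtail, Finset.mem_filter] at hmem
    rcases hmem.2 with ⟨h1, h2⟩ | ⟨h1, h2⟩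
    · exact hi (le_antisymm h2 h1)
    · exact hi (le_antisymm h1 h2)
  have hC : i0 ∈ Chead i0 i := by
    rw [Chead, Finset.mem_sdiff]
    exact ⟨Finset.mem_univ _, hD⟩
  have hCD : Chead i0 i = univ \ Dtail i0 i := rfl
  have hfsel : fsel i0 (fun y => marg (Chead i0 i) μ y * marg (Dtail i0 i) μ' y)
      = fsel i0 μ := by
    have := fsel_prod_aux (Dtail i0 i) i0 hD μ μ'
    rw [hμ'.2, mul_one] at this
    rw [hCD]
    exact this
  have hF : ∀ x, Fsel i0 (fun y => marg (Chead i0 i) μ y * marg (Dtail i0 i) μ' y) x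
      = (if x i0 = false then marg (Chead i0 i) μ x else 0) * marg (Dtail i0 i) μ' x := by
    intro x
    unfold Fsel
    by_cases hx : x i0 = false <;> simp [hx]
  have h1 : ∀ x, s * (Fsel i0 (fun y => marg (Chead i0 i) μ y * marg (Dtail i0 i) μ' y) x
            - fsel i0 (fun y => marg (Chead i0 i) μ y * marg (Dtail i0 i) μ' y)
              * (marg (Chead i0 i) μ x * marg (Dtail i0 i) μ' x))
        = marg (Chead i0 i) (fun y => s * (Fsel i0 μ y - fsel i0 μ * μ y)) x
            * marg (Dtail i0 i) μ' x := by
    intro x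
    have hfun : (fun y => s * (Fsel i0 μ y - fsel i0 μ * μ y))
        = fun y => s * Fsel i0 μ y + (-(s * fsel i0 μ)) * μ y := by
      funext y; ring
    rw [hfun, marg_lin, marg_Fsel _ _ hC, hfsel, hF]
    by_cases hx : x i0 = false <;> simp [hx] <;> ring
  refine ⟨h1, fun x => ?_⟩
  have hfun2 : Tsel s h i0 μ = fun y => 1 * μ y + h * (s * (Fsel i0 μ y - fsel i0 μ * μ y)) := by
    funext y; unfold Tsel; ring
  rw [hfun2, marg_lin]
  have := h1 x
  unfold Tsel
  calc marg (Chead i0 i) μ x * marg (Dtail i0 i) μ' x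
        + h * s * (Fsel i0 (fun y => marg (Chead i0 i) μ y * marg (Dtail i0 i) μ' y) x
          - fsel i0 (fun y => marg (Chead i0 i) μ y * marg (Dtail i0 i) μ' y)
            * (marg (Chead i0 i) μ x * marg (Dtail i0 i) μ' x))
      = marg (Chead i0 i) μ x * marg (Dtail i0 i) μ' x
        + h * (marg (Chead i0 i) (fun y => s * (Fsel i0 μ y - fsel i0 μ * μ y)) x
            * marg (Dtail i0 i) μ' x) := by rw [← this]; ring
    _ = (1 * marg (Chead i0 i) μ x
          + h * marg (Chead i0 i) (fun y => s * (Fsel i0 μ y - fsel i0 μ * μ y)) x)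
        * marg (Dtail i0 i) μ' x := by ring
end
end

section
/- One-step intertwining (Lemma: restriction is linear): for all probability measures ν on X and all m ∈ ℕ, (T_h^sel)^m(T̃_h(ν)) = (1 − h Σ_{i≠i•} ϱ_i)(T_h^sel)^{m+1}(ν) + h Σ_{i≠i•} ϱ_i · ((T_h^sel)^{m+1}(ν))_{C_i} ⊗ ν_{D_i}. -/
open Finset Real Filter MeasureTheory

noncomputable section

/-- the one-step approximate Euler operator T̃_h. -/
def Ttilde {n : ℕ} (s h : ℝ) (i0 : Fin n) (ρ : Fin n → ℝ) (ν : X n → ℝ) : X n → ℝ :=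
  fun x => (1 - h * ∑ i ∈ univ.erase i0, ρ i) * Tsel s h i0 ν x
    + h * ∑ i ∈ univ.erase i0,
        ρ i * (marg (Chead i0 i) (Tsel s h i0 ν) x * marg (Dtail i0 i) ν x)

/-! One selection step multiplies `μ x` by a factor `1 + hs(𝟙[x i0 = false] - f(μ))` that depends
on `x` only through the selected site and on `μ` only through its selected mass `f(μ)`.
Recombining `μ` with a probability vector `ν` does not change `f(μ)`, and since every head `C_i`
contains the selected site, the factor passes through the marginal on `C_i`. Hence selection
and recombination against a fixed `ν` commute, and iterating gives the claim. -/

variable {n : ℕ}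

lemma Dtail_eq_compl_Chead (i0 i : Fin n) : Dtail i0 i = univ \ Chead i0 i := by
  simp [Chead]

lemma mem_Chead_self {i0 i : Fin n} (hi : i ≠ i0) : i0 ∈ Chead i0 i := by
  simp only [Chead, Finset.mem_sdiff, Finset.mem_univ, true_and, Dtail, Finset.mem_filter,
    not_or, not_and]
  exact ⟨fun h₁ h₂ => hi (le_antisymm h₂ h₁), fun h₁ h₂ => hi (le_antisymm h₁ h₂)⟩

lemma marg_mul_of_forall_eq {A : Finset (Fin n)} {g : X n → ℝ}
    (hg : ∀ x y : X n, (∀ i ∈ A, x i = y i) → g x = g y) (μ : X n → ℝ) (x : X n) :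
    marg A (fun y => g y * μ y) x = g x * marg A μ x := by
  rw [marg, marg, mul_sum]
  refine sum_congr rfl fun y _ => ?_
  split_ifs with hy
  · rw [hg y x hy]
  · rw [mul_zero]

lemma eq_piecewise_iff (C : Finset (Fin n)) (x y z : X n) :
    x = C.piecewise y z ↔ (∀ i ∈ C, y i = x i) ∧ ∀ i ∈ univ \ C, z i = x i := by
  simp only [funext_iff, piecewise]
  constructor
  · rintro hx
    exact ⟨fun i hi => by simp [hx i, hi], fun i hi => by simp [hx i, (mem_sdiff.1 hi).2]⟩
  · rintro ⟨hC, hD⟩ i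
    by_cases hi : i ∈ C <;> simp [hi, hC, hD]

/-- Each pair of configurations `y, z` glues to exactly one `x`, namely `C.piecewise y z`. -/
lemma sum_marg_mul_marg_compl (C : Finset (Fin n)) (f g : X n → ℝ) :
    ∑ x, marg C f x * marg (univ \ C) g x = (∑ x, f x) * ∑ x, g x := by
  simp only [marg, sum_mul_sum]
  rw [sum_comm]
  refine sum_congr rfl fun y _ => ?_
  rw [sum_comm]
  refine sum_congr rfl fun z _ => ?_
  simp only [ite_zero_mul_ite_zero, ← eq_piecewise_iff, sum_ite_eq', mem_univ, if_true]

lemma Fsel_apply (i0 : Fin n) (μ : X n → ℝ) (x : X n) :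
    Fsel i0 μ x = (if x i0 = false then 1 else 0) * μ x := by
  simp only [Fsel, ite_mul, one_mul, zero_mul]

def selFactor (s h : ℝ) (i0 : Fin n) (f : ℝ) (x : X n) : ℝ :=
  1 + h * s * ((if x i0 = false then 1 else 0) - f)

lemma Tsel_apply (s h : ℝ) (i0 : Fin n) (μ : X n → ℝ) (x : X n) :
    Tsel s h i0 μ x = selFactor s h i0 (fsel i0 μ) x * μ x := by
  rw [Tsel, selFactor, Fsel_apply]
  ring

lemma marg_Tsel {A : Finset (Fin n)} {i0 : Fin n} (hA : i0 ∈ A) (s h : ℝ)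
    (μ : X n → ℝ) (x : X n) :
    marg A (Tsel s h i0 μ) x = selFactor s h i0 (fsel i0 μ) x * marg A μ x := by
  have hfactor : ∀ x y : X n, (∀ i ∈ A, x i = y i) →
      selFactor s h i0 (fsel i0 μ) x = selFactor s h i0 (fsel i0 μ) y :=
    fun x y hxy => by simp only [selFactor, hxy i0 hA]
  rw [show Tsel s h i0 μ = _ from funext (Tsel_apply s h i0 μ), marg_mul_of_forall_eq hfactor]

lemma fsel_marg_Chead_mul_marg_Dtail {i0 i : Fin n} (hi : i ≠ i0) (μ ν : X n → ℝ) :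
    fsel i0 (fun x => marg (Chead i0 i) μ x * marg (Dtail i0 i) ν x)
      = fsel i0 μ * ∑ x, ν x := by
  have hind : ∀ x y : X n, (∀ j ∈ Chead i0 i, x j = y j) →
      (if x i0 = false then (1 : ℝ) else 0) = if y i0 = false then 1 else 0 :=
    fun x y hxy => by rw [hxy i0 (mem_Chead_self hi)]
  simp only [fsel, Fsel_apply, ← mul_assoc, ← marg_mul_of_forall_eq hind, Dtail_eq_compl_Chead,
    sum_marg_mul_marg_compl]

/-- The paper's `T̃_h ν` is `recombine h i0 ρ (T_h^sel ν) ν`. -/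
def recombine (h : ℝ) (i0 : Fin n) (ρ : Fin n → ℝ) (μ ν : X n → ℝ) : X n → ℝ :=
  fun x => (1 - h * ∑ i ∈ univ.erase i0, ρ i) * μ x
    + h * ∑ i ∈ univ.erase i0, ρ i * (marg (Chead i0 i) μ x * marg (Dtail i0 i) ν x)

lemma fsel_recombine (h : ℝ) (i0 : Fin n) (ρ : Fin n → ℝ) (μ : X n → ℝ) {ν : X n → ℝ}
    (hν : ∑ x, ν x = 1) :
    fsel i0 (recombine h i0 ρ μ ν) = fsel i0 μ := by
  have hlin : fsel i0 (recombine h i0 ρ μ ν) = (1 - h * ∑ i ∈ univ.erase i0, ρ i) * fsel i0 μ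
      + h * ∑ i ∈ univ.erase i0,
          ρ i * fsel i0 (fun x => marg (Chead i0 i) μ x * marg (Dtail i0 i) ν x) := by
    simp only [fsel, Fsel_apply, recombine, mul_add, mul_sum, sum_add_distrib]
    rw [sum_comm (s := univ)]
    congr 1
    · exact sum_congr rfl fun _ _ => by ring
    · exact sum_congr rfl fun _ _ => sum_congr rfl fun _ _ => by ring
  have hprod : ∀ i ∈ univ.erase i0,
      ρ i * fsel i0 (fun x => marg (Chead i0 i) μ x * marg (Dtail i0 i) ν x) = ρ i * fsel i0 μ :=
    fun i hi => by rw [fsel_marg_Chead_mul_marg_Dtail (ne_of_mem_erase hi), hν, mul_one]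
  rw [hlin, sum_congr rfl hprod, ← sum_mul]
  ring

lemma recombine_semiconj_Tsel (s h : ℝ) (i0 : Fin n) (ρ : Fin n → ℝ) {ν : X n → ℝ}
    (hν : ∑ x, ν x = 1) :
    Function.Semiconj (recombine h i0 ρ · ν) (Tsel s h i0) (Tsel s h i0) := by
  intro μ
  funext x
  set K := selFactor s h i0 (fsel i0 μ) x
  have hmarg : ∀ i ∈ univ.erase i0,
      ρ i * (marg (Chead i0 i) (Tsel s h i0 μ) x * marg (Dtail i0 i) ν x)
        = K * (ρ i * (marg (Chead i0 i) μ x * marg (Dtail i0 i) ν x)) := fun i hi => by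
    rw [marg_Tsel (mem_Chead_self (ne_of_mem_erase hi))]
    ring
  dsimp only
  rw [Tsel_apply, fsel_recombine h i0 ρ μ hν, recombine, recombine, sum_congr rfl hmarg,
    ← mul_sum, Tsel_apply]
  ring

theorem stmt_7_general {n : ℕ} (i0 : Fin n) (s h : ℝ)
    (ρ : Fin n → ℝ)
    (ν : X n → ℝ) (hν : isProb ν) (m : ℕ) :
    (Tsel s h i0)^[m] (Ttilde s h i0 ρ ν)
      = fun x => (1 - h * ∑ i ∈ univ.erase i0, ρ i) * (Tsel s h i0)^[m + 1] ν x
          + h * ∑ i ∈ univ.erase i0,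
              ρ i * (marg (Chead i0 i) ((Tsel s h i0)^[m + 1] ν) x
                      * marg (Dtail i0 i) ν x) := by
  have hTtilde : Ttilde s h i0 ρ ν = recombine h i0 ρ (Tsel s h i0 ν) ν := rfl
  rw [hTtilde, ← (recombine_semiconj_Tsel s h i0 ρ hν.2).iterate_right m (Tsel s h i0 ν),
    ← Function.iterate_succ_apply]
  rfl

/-- One-step intertwining (restriction is linear). -/
theorem stmt_7 {n : ℕ} (i0 : Fin n) (s h : ℝ) (hs : 0 < s) (hh : 0 < h)
    (ρ : Fin n → ℝ) (hρ : ∀ i, i ≠ i0 → 0 ≤ ρ i)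
    (hsmall : 0 ≤ 1 - h * ∑ i ∈ univ.erase i0, ρ i)
    (hTselP : ∀ ν : X n → ℝ, isProb ν → isProb (Tsel s h i0 ν))
    (ν : X n → ℝ) (hν : isProb ν) (m : ℕ) :
    (Tsel s h i0)^[m] (Ttilde s h i0 ρ ν)
      = fun x => (1 - h * ∑ i ∈ univ.erase i0, ρ i) * (Tsel s h i0)^[m + 1] ν x
          + h * ∑ i ∈ univ.erase i0,
              ρ i * (marg (Chead i0 i) ((Tsel s h i0)^[m + 1] ν) x
                      * marg (Dtail i0 i) ν x) :=
  stmt_7_general i0 s h ρ ν hν m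
end
end

section
/- The approximate Euler operator agrees with the exact one to second order: T̃_h(ν) = T_h(ν) + O(h²) uniformly over probability measures ν; explicitly, there exists K > 0 (independent of ν) with ‖T̃_h(ν) − T_h(ν)‖₁ ≤ K h² for all probability measures ν on X and all h ∈ (0,1]. -/
open Finset Real Filter MeasureTheory

noncomputable section

/-- the full selection-recombination vector field Ψ. -/
def Psi {n : ℕ} (s : ℝ) (i0 : Fin n) (ρ : Fin n → ℝ) (ν : X n → ℝ) : X n → ℝ :=
  fun x => s * (Fsel i0 ν x - fsel i0 ν * ν x)
    + ∑ i ∈ univ.erase i0,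
        ρ i * (marg (Chead i0 i) ν x * marg (Dtail i0 i) ν x - ν x)

/-- the exact Euler operator T_h. -/
def Th {n : ℕ} (s h : ℝ) (i0 : Fin n) (ρ : Fin n → ℝ) (ν : X n → ℝ) : X n → ℝ :=
  fun x => ν x + h * Psi s i0 ρ ν x


def Del {n : ℕ} (s : ℝ) (i0 : Fin n) (ν : X n → ℝ) : X n → ℝ :=
  fun y => s * (Fsel i0 ν y - fsel i0 ν * ν y)

def Err {n : ℕ} (s : ℝ) (i0 : Fin n) (ρ : Fin n → ℝ) (ν : X n → ℝ) : X n → ℝ :=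
  fun x => ∑ i ∈ univ.erase i0,
    ρ i * (marg (Chead i0 i) (Del s i0 ν) x * marg (Dtail i0 i) ν x - Del s i0 ν x)

lemma marg_add_mul {n : ℕ} (A : Finset (Fin n)) (ν g : X n → ℝ) (c : ℝ) (x : X n) :
    marg A (fun y => ν y + c * g y) x = marg A ν x + c * marg A g x := by
  simp only [marg, Finset.mul_sum, ← Finset.sum_add_distrib]
  refine Finset.sum_congr rfl fun y _ => ?_
  by_cases hy : ∀ i ∈ A, y i = x i
  · simp only [if_pos hy]
  · simp only [if_neg hy]; ring

lemma key_identity {n : ℕ} (s h : ℝ) (i0 : Fin n) (ρ : Fin n → ℝ) (ν : X n → ℝ) (x : X n) :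
    Ttilde s h i0 ρ ν x - Th s h i0 ρ ν x = h ^ 2 * Err s i0 ρ ν x := by
  have hTsel : Tsel s h i0 ν = fun y => ν y + h * Del s i0 ν y := by
    funext y; simp only [Tsel, Del]; ring
  have hS1 : ∑ i ∈ univ.erase i0,
      ρ i * (marg (Chead i0 i) (Tsel s h i0 ν) x * marg (Dtail i0 i) ν x)
      = ∑ i ∈ univ.erase i0,
          (ρ i * (marg (Chead i0 i) ν x * marg (Dtail i0 i) ν x - ν x)
            + ρ i * ν x
            + h * (ρ i * (marg (Chead i0 i) (Del s i0 ν) x * marg (Dtail i0 i) ν x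
                - Del s i0 ν x) + ρ i * Del s i0 ν x)) := by
    refine Finset.sum_congr rfl fun i _ => ?_
    rw [hTsel, marg_add_mul]; ring
  simp only [Ttilde, Th, Psi, Err]
  rw [hS1]
  simp only [Finset.sum_add_distrib, ← Finset.sum_mul, ← Finset.mul_sum, Tsel, Del]
  ring

/-- T̃_h = T_h + O(h²), uniformly over probability measures. -/
theorem stmt_8 {n : ℕ} (i0 : Fin n) (s : ℝ) (hs : 0 < s)
    (ρ : Fin n → ℝ) (hρ : ∀ i, i ≠ i0 → 0 ≤ ρ i) :
    ∃ K > 0, ∀ ν : X n → ℝ, isProb ν → ∀ h : ℝ, 0 < h → h ≤ 1 →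
      ∑ x, |Ttilde s h i0 ρ ν x - Th s h i0 ρ ν x| ≤ K * h ^ 2 := by
  classical
  have hR0 : 0 ≤ ∑ i ∈ univ.erase i0, ρ i :=
    Finset.sum_nonneg fun i hi => hρ i (Finset.ne_of_mem_erase hi)
  refine ⟨(Fintype.card (X n) : ℝ) * (2 * s * ∑ i ∈ univ.erase i0, ρ i) + 1, by positivity, ?_⟩
  intro ν hν h hh0 hh1
  have hErr : ∀ x, |Err s i0 ρ ν x| ≤ 2 * s * ∑ i ∈ univ.erase i0, ρ i := by
    intro x
    have hν1 : ∀ y, ν y ≤ 1 := by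
      intro y
      rw [← hν.2]
      exact Finset.single_le_sum (fun z _ => hν.1 z) (Finset.mem_univ y)
    have hF0 : ∀ y, 0 ≤ Fsel i0 ν y := by
      intro y; simp only [Fsel]; split_ifs
      · exact hν.1 y
      · exact le_rfl
    have hFle : ∀ y, Fsel i0 ν y ≤ ν y := by
      intro y; simp only [Fsel]; split_ifs
      · exact le_rfl
      · exact hν.1 y
    have hf0 : 0 ≤ fsel i0 ν := Finset.sum_nonneg fun y _ => hF0 y
    have hf1 : fsel i0 ν ≤ 1 := by
      rw [← hν.2]; exact Finset.sum_le_sum fun y _ => hFle y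
    have hD : ∀ y, |Del s i0 ν y| ≤ s * ν y := by
      intro y
      have h1 : Fsel i0 ν y - fsel i0 ν * ν y ≤ ν y := by nlinarith [hν.1 y, hFle y]
      have h2 : -(ν y) ≤ Fsel i0 ν y - fsel i0 ν * ν y := by nlinarith [hν.1 y, hF0 y]
      simp only [Del, abs_mul, abs_of_pos hs]
      have := abs_le.mpr ⟨h2, h1⟩
      nlinarith [hs.le]
    have hmD : ∀ A : Finset (Fin n), |marg A (Del s i0 ν) x| ≤ s := by
      intro A
      calc |marg A (Del s i0 ν) x|
          ≤ ∑ y, |if ∀ i ∈ A, y i = x i then Del s i0 ν y else 0| :=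
            Finset.abs_sum_le_sum_abs _ _
        _ ≤ ∑ y, s * ν y := by
            refine Finset.sum_le_sum fun y _ => ?_
            split_ifs
            · exact hD y
            · simp only [abs_zero]; exact mul_nonneg hs.le (hν.1 y)
        _ = s := by rw [← Finset.mul_sum, hν.2, mul_one]
    have hmν : ∀ A : Finset (Fin n), |marg A ν x| ≤ 1 := by
      intro A
      calc |marg A ν x|
          ≤ ∑ y, |if ∀ i ∈ A, y i = x i then ν y else 0| := Finset.abs_sum_le_sum_abs _ _
        _ ≤ ∑ y, ν y := by
            refine Finset.sum_le_sum fun y _ => ?_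
            split_ifs
            · exact le_of_eq (abs_of_nonneg (hν.1 y))
            · simp [hν.1 y]
        _ = 1 := hν.2
    calc |Err s i0 ρ ν x|
        ≤ ∑ i ∈ univ.erase i0,
            |ρ i * (marg (Chead i0 i) (Del s i0 ν) x * marg (Dtail i0 i) ν x - Del s i0 ν x)| :=
          Finset.abs_sum_le_sum_abs _ _
      _ ≤ ∑ i ∈ univ.erase i0, ρ i * (2 * s) := by
          refine Finset.sum_le_sum fun i hi => ?_
          have hρi := hρ i (Finset.ne_of_mem_erase hi)
          rw [abs_mul, abs_of_nonneg hρi]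
          have h1 : |marg (Chead i0 i) (Del s i0 ν) x * marg (Dtail i0 i) ν x| ≤ s := by
            rw [abs_mul]
            calc |marg (Chead i0 i) (Del s i0 ν) x| * |marg (Dtail i0 i) ν x|
                ≤ s * 1 := by
                  exact mul_le_mul (hmD _) (hmν _) (abs_nonneg _) hs.le
              _ = s := mul_one s
          have h2 : |Del s i0 ν x| ≤ s := le_trans (hD x)
            (by nlinarith [hν.1 x, hν1 x])
          have h3 : |marg (Chead i0 i) (Del s i0 ν) x * marg (Dtail i0 i) ν x - Del s i0 ν x|
              ≤ 2 * s := by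
            calc |marg (Chead i0 i) (Del s i0 ν) x * marg (Dtail i0 i) ν x - Del s i0 ν x|
                ≤ |marg (Chead i0 i) (Del s i0 ν) x * marg (Dtail i0 i) ν x| + |Del s i0 ν x| :=
                  abs_sub _ _
              _ ≤ s + s := add_le_add h1 h2
              _ = 2 * s := by ring
          exact mul_le_mul_of_nonneg_left h3 hρi
      _ = 2 * s * ∑ i ∈ univ.erase i0, ρ i := by rw [← Finset.sum_mul]; ring
  have hh2 : (0:ℝ) ≤ h ^ 2 := sq_nonneg h
  calc ∑ x, |Ttilde s h i0 ρ ν x - Th s h i0 ρ ν x|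
      = ∑ x, h ^ 2 * |Err s i0 ρ ν x| := by
        refine Finset.sum_congr rfl fun x _ => ?_
        rw [key_identity, abs_mul, abs_of_nonneg hh2]
    _ ≤ ∑ x : X n, h ^ 2 * (2 * s * ∑ i ∈ univ.erase i0, ρ i) := by
        refine Finset.sum_le_sum fun x _ => mul_le_mul_of_nonneg_left (hErr x) hh2
    _ = (Fintype.card (X n) : ℝ) * (2 * s * ∑ i ∈ univ.erase i0, ρ i) * h ^ 2 := by
        simp only [Finset.sum_const, Finset.card_univ, nsmul_eq_mul]; ring
    _ ≤ ((Fintype.card (X n) : ℝ) * (2 * s * ∑ i ∈ univ.erase i0, ρ i) + 1) * h ^ 2 := by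
        nlinarith
end
end

section
/- Under the pure selection flow, the conditional distributions within the fit and unfit subpopulations are invariant: b(φ_t(ν)) = b(ν) and d(φ_t(ν)) = d(ν) for all t ≥ 0, whenever 0 < f(ν) < 1. -/
/-! `phi s i0 t` multiplies the mass of every fit type by `exp (s * t)`, leaves the unfit
masses unchanged, and divides everything by one common normalizer. Conditioning on the fit
(resp. unfit) set divides by the total mass of that set, which carries the same factors, so
the normalizer and the constant `exp (s * t)` cancel. -/

open Finset Real Filter MeasureTheory

noncomputable section

/-- conditional type distribution within the fit subpopulation. -/
def bdist {n : ℕ} (i0 : Fin n) (ν : X n → ℝ) : X n → ℝ :=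
  fun x => Fsel i0 ν x / fsel i0 ν

/-- conditional type distribution within the unfit subpopulation. -/
def ddist {n : ℕ} (i0 : Fin n) (ν : X n → ℝ) : X n → ℝ :=
  fun x => (ν x - Fsel i0 ν x) / (1 - fsel i0 ν)

section

variable {n : ℕ} (i0 : Fin n) (s t : ℝ) (ν : X n → ℝ)

lemma Fsel_phi (x : X n) :
    Fsel i0 (phi s i0 t ν) x =
      exp (s * t) * Fsel i0 ν x / (exp (s * t) * fsel i0 ν + 1 - fsel i0 ν) := by
  by_cases hx : x i0 = false <;> simp [Fsel, phi, hx]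

lemma fsel_phi :
    fsel i0 (phi s i0 t ν) =
      exp (s * t) * fsel i0 ν / (exp (s * t) * fsel i0 ν + 1 - fsel i0 ν) := by
  simp only [fsel, Fsel_phi, ← Finset.sum_div, ← Finset.mul_sum]

lemma phi_sub_Fsel_phi (x : X n) :
    phi s i0 t ν x - Fsel i0 (phi s i0 t ν) x =
      (ν x - Fsel i0 ν x) / (exp (s * t) * fsel i0 ν + 1 - fsel i0 ν) := by
  rw [Fsel_phi, phi]
  ring

lemma bdist_phi (hD : exp (s * t) * fsel i0 ν + 1 - fsel i0 ν ≠ 0) :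
    bdist i0 (phi s i0 t ν) = bdist i0 ν := by
  funext x
  rw [bdist, bdist, Fsel_phi, fsel_phi, div_div_div_cancel_right₀ hD,
    mul_div_mul_left _ _ (exp_pos _).ne']

lemma ddist_phi (hD : exp (s * t) * fsel i0 ν + 1 - fsel i0 ν ≠ 0) :
    ddist i0 (phi s i0 t ν) = ddist i0 ν := by
  have one_sub_fsel : 1 - fsel i0 (phi s i0 t ν) =
      (1 - fsel i0 ν) / (exp (s * t) * fsel i0 ν + 1 - fsel i0 ν) := by
    rw [fsel_phi, one_sub_div hD]
    ring
  funext x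
  rw [ddist, ddist, phi_sub_Fsel_phi, one_sub_fsel, div_div_div_cancel_right₀ hD]
end

theorem stmt_14_general {n : ℕ} (i0 : Fin n) (s : ℝ)
    (ν : X n → ℝ)
    (h0 : 0 < fsel i0 ν) (h1 : fsel i0 ν < 1) :
    ∀ t : ℝ, 0 ≤ t →
      bdist i0 (phi s i0 t ν) = bdist i0 ν ∧ ddist i0 (phi s i0 t ν) = ddist i0 ν := by
  intro t _
  have hD : exp (s * t) * fsel i0 ν + 1 - fsel i0 ν ≠ 0 := by
    have := mul_pos (exp_pos (s * t)) h0
    exact ne_of_gt (by linarith)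
  exact ⟨bdist_phi i0 s t ν hD, ddist_phi i0 s t ν hD⟩

/-- Under the pure selection flow, the conditional distributions within the fit
and unfit subpopulations are invariant. -/
theorem stmt_14 {n : ℕ} (i0 : Fin n) (s : ℝ) (hs : 0 < s)
    (ν : X n → ℝ) (hν : isProb ν)
    (h0 : 0 < fsel i0 ν) (h1 : fsel i0 ν < 1) :
    ∀ t : ℝ, 0 ≤ t →
      bdist i0 (phi s i0 t ν) = bdist i0 ν ∧ ddist i0 (phi s i0 t ν) = ddist i0 ν :=
  stmt_14_general i0 s ν h0 h1
end
end
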